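/- Let F ∈ T^{∞,2} and G ∈ T^{1,2}. Then ∫_{ℝ₊^{n+1}} |F||G| dy dt ≤ C ∫_{ℝⁿ} 𝒞₂(F)(x) S(G)(x) dx, where 𝒞₂(F)(x) = (sup_{B ∋ x} (1/|B|) ∫_{B̂} |F|² dy dt)^{1/2} and S(G) is the parabolic square function. Consequently T^{∞,2} embeds into the dual of T^{1,2}. -/

import Mathlib

open MeasureTheory Metric
open scoped ENNReal NNReal

/-- The parabolic tent over the ball `B(c,r)`. -/
def tentBall (n : ℕ) (c : EuclideanSpace ℝ (Fin n)) (r : ℝ) :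
    Set (ℝ × EuclideanSpace ℝ (Fin n)) :=
  {z | 0 < z.1 ∧ Real.sqrt z.1 ≤ infDist z.2 (ball c r)ᶜ}

/-- The parabolic square function. -/
noncomputable def sqFn (n : ℕ) (G : ℝ × EuclideanSpace ℝ (Fin n) → ℂ)
    (x : EuclideanSpace ℝ (Fin n)) : ℝ≥0∞ :=
  (∫⁻ z in {z : ℝ × EuclideanSpace ℝ (Fin n) |
      0 < z.1 ∧ z.2 ∈ ball x (Real.sqrt z.1)},
    ENNReal.ofReal (‖G z‖ ^ 2 / z.1 ^ ((n:ℝ)/2))) ^ (1/2 : ℝ)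

/-- `𝒞₂(F)(x) = ( sup_{B ∋ x} |B|⁻¹ ∫_{B̂} |F|² )^{1/2}`. -/
noncomputable def carl2 (n : ℕ) (F : ℝ × EuclideanSpace ℝ (Fin n) → ℂ)
    (x : EuclideanSpace ℝ (Fin n)) : ℝ≥0∞ :=
  (⨆ (c : EuclideanSpace ℝ (Fin n)) (r : ℝ) (_ : 0 < r) (_ : x ∈ ball c r),
    (volume (ball c r))⁻¹ * ∫⁻ z in tentBall n c r, ENNReal.ofReal (‖F z‖ ^ 2)) ^ (1/2 : ℝ)

/-!
Put `ρ = S(G) / 𝒞₂(F)` and `w(z) = 2 ⨍_{B(z)} ρ⁻¹`, where `B(t, y) = B(y, √t)` is the shadow of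
`z = (t, y)`, and split `|F||G| ≤ |F|² w⁻¹ + |G|² w`. Integrating `|G|² w` over `z` and exchanging
the integrals turns it into a multiple of `∫ ρ⁻¹ S(G)² ≤ ∫ 𝒞₂(F) S(G)`. For the other term,
Chebyshev's inequality shows that `w(z)⁻¹ > λ` forces `{ρ > λ}` to fill half of `B(z)`; a Vitali
covering of the points with this property by tents over enlarged shadows bounds their
`|F|²`-mass by `C ∫_{ρ > λ} 𝒞₂(F)²`, and the layer-cake formula in `λ` gives
`∫ |F|² w⁻¹ ≤ C ∫ 𝒞₂(F)² ρ ≤ C ∫ 𝒞₂(F) S(G)`.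
-/

open Set

namespace ENNReal

theorem mul_le_sq_mul_inv_add_sq_mul (a b w : ℝ≥0∞) : a * b ≤ a ^ 2 * w⁻¹ + b ^ 2 * w := by
  rcases eq_or_ne w 0 with rfl | h0
  · rcases eq_or_ne a 0 with rfl | ha <;> simp [*]
  rcases eq_or_ne w ∞ with rfl | htop
  · rcases eq_or_ne b 0 with rfl | hb <;> simp [*]
  rcases le_total b (a * w⁻¹) with h | h
  · calc a * b ≤ a * (a * w⁻¹) := by gcongr
      _ ≤ _ := by rw [← mul_assoc, ← sq]; exact le_self_add
  · have hab : a ≤ b * w := by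
      calc a = a * w⁻¹ * w := by rw [mul_assoc, ENNReal.inv_mul_cancel h0 htop, mul_one]
        _ ≤ b * w := by gcongr
    calc a * b ≤ b * w * b := by gcongr
      _ ≤ _ := by rw [mul_right_comm, ← sq]; exact le_add_self

theorem sq_mul_div_le_mul (c s : ℝ≥0∞) : c ^ 2 * (s / c) ≤ c * s := by
  rcases eq_or_ne c 0 with rfl | h0
  · simp
  rcases eq_or_ne c ∞ with rfl | htop
  · simp
  rw [sq, mul_assoc, ENNReal.mul_div_cancel h0 htop]

theorem inv_div_mul_sq_le_mul (c s : ℝ≥0∞) : (s / c)⁻¹ * s ^ 2 ≤ c * s := by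
  rcases eq_or_ne s 0 with rfl | h0
  · simp
  rcases eq_or_ne s ∞ with rfl | htop
  · rcases eq_or_ne c 0 with rfl | hc
    · simp [ENNReal.div_zero]
    · simp [hc]
  rw [ENNReal.inv_div (Or.inr htop) (Or.inr h0), sq, ← mul_assoc, ENNReal.div_mul_cancel h0 htop]

end ENNReal

section Prod

variable {α β : Type*} [MeasurableSpace α] [MeasurableSpace β] {μ : Measure α} {ν : Measure β}

theorem measurable_setLIntegral_preimage_prodMk_right [SFinite μ] {S : Set (α × β)}
    (hS : MeasurableSet S) {f : α → ℝ≥0∞} (hf : Measurable f) :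
    Measurable fun b => ∫⁻ a in (·, b) ⁻¹' S, f a ∂μ := by
  simp_rw [← lintegral_indicator (measurable_prodMk_right hS)]
  exact ((hf.comp measurable_fst).indicator hS).lintegral_prod_left'

theorem measurable_setLIntegral_preimage_prodMk_left [SFinite ν] {S : Set (α × β)}
    (hS : MeasurableSet S) {g : β → ℝ≥0∞} (hg : Measurable g) :
    Measurable fun a => ∫⁻ b in Prod.mk a ⁻¹' S, g b ∂ν := by
  simp_rw [← lintegral_indicator (measurable_prodMk_left hS)]
  exact ((hg.comp measurable_snd).indicator hS).lintegral_prod_right'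

theorem lintegral_mul_setLIntegral_preimage_prodMk_comm [SFinite μ] [SFinite ν]
    {S : Set (α × β)} (hS : MeasurableSet S) {f : α → ℝ≥0∞} {g : β → ℝ≥0∞}
    (hf : Measurable f) (hg : Measurable g) :
    ∫⁻ a, f a * ∫⁻ b in Prod.mk a ⁻¹' S, g b ∂ν ∂μ
      = ∫⁻ b, g b * ∫⁻ a in (·, b) ⁻¹' S, f a ∂μ ∂ν := by
  have hfg : Measurable (S.indicator fun p : α × β => f p.1 * g p.2) :=
    ((hf.comp measurable_fst).mul (hg.comp measurable_snd)).indicator hS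
  calc ∫⁻ a, f a * ∫⁻ b in Prod.mk a ⁻¹' S, g b ∂ν ∂μ
      = ∫⁻ a, ∫⁻ b, S.indicator (fun p : α × β => f p.1 * g p.2) (a, b) ∂ν ∂μ := by
        refine lintegral_congr fun a => ?_
        rw [← lintegral_const_mul _ hg, ← lintegral_indicator (measurable_prodMk_left hS)]
        rfl
    _ = ∫⁻ b, ∫⁻ a, S.indicator (fun p : α × β => f p.1 * g p.2) (a, b) ∂μ ∂ν :=
        lintegral_lintegral_swap hfg.aemeasurable
    _ = ∫⁻ b, g b * ∫⁻ a in (·, b) ⁻¹' S, f a ∂μ ∂ν := by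
        refine lintegral_congr fun b => ?_
        rw [← lintegral_const_mul _ hf, ← lintegral_indicator (measurable_prodMk_right hS)]
        simp_rw [mul_comm (g b)]
        rfl

theorem volume_setOf_pos_ofReal_lt (a : ℝ≥0∞) :
    volume {t : ℝ | 0 < t ∧ ENNReal.ofReal t < a} = a := by
  rcases eq_or_ne a ∞ with rfl | ha
  · simp only [ENNReal.ofReal_lt_top, and_true]
    exact Real.volume_Ioi
  · have : {t : ℝ | 0 < t ∧ ENNReal.ofReal t < a} = Ioo 0 a.toReal := by
      ext t
      simp only [mem_ofPred_eq, mem_Ioo, and_congr_right_iff]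
      exact fun ht => ENNReal.ofReal_lt_iff_lt_toReal ht.le ha
    rw [this, Real.volume_Ioo, sub_zero, ENNReal.ofReal_toReal ha]

theorem lintegral_eq_lintegral_meas_ofReal_lt [SFinite μ] {f : α → ℝ≥0∞} (hf : Measurable f) :
    ∫⁻ a, f a ∂μ = ∫⁻ t in Ioi 0, μ {a | ENNReal.ofReal t < f a} := by
  have hS : MeasurableSet {p : α × ℝ | ENNReal.ofReal p.2 < f p.1} :=
    measurableSet_lt (ENNReal.measurable_ofReal.comp measurable_snd) (hf.comp measurable_fst)
  calc ∫⁻ a, f a ∂μ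
      = ∫⁻ a, volume.restrict (Ioi 0) (Prod.mk a ⁻¹' {p | ENNReal.ofReal p.2 < f p.1}) ∂μ := by
        refine lintegral_congr fun a => ?_
        rw [Measure.restrict_apply' measurableSet_Ioi, ← volume_setOf_pos_ofReal_lt (f a),
          inter_comm]
        rfl
    _ = ∫⁻ t in Ioi 0, μ {a | ENNReal.ofReal t < f a} :=
        (Measure.prod_apply hS).symm.trans (Measure.prod_apply_symm hS)

theorem measure_le_two_mul_measure_inter_lt_of_two_mul_setLAverage_inv_le {ρ : α → ℝ≥0∞}
    (hρ : Measurable ρ) {B : Set α} (hB : μ B ≠ ∞) {a : ℝ≥0∞} (ha₀ : a ≠ 0) (ha : a ≠ ∞)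
    (h : 2 * ⨍⁻ x in B, (ρ x)⁻¹ ∂μ ≤ a⁻¹) : μ B ≤ 2 * μ (B ∩ {x | a < ρ x}) := by
  rcases eq_or_ne (μ B) 0 with hB₀ | hB₀
  · simp [hB₀]
  have hU : MeasurableSet {x | a < ρ x} := measurableSet_lt measurable_const hρ
  set c := μ (B \ {x | a < ρ x})
  have hc : c * a⁻¹ ≤ μ B * ⨍⁻ x in B, (ρ x)⁻¹ ∂μ := by
    calc c * a⁻¹ = ∫⁻ _ in B \ {x | a < ρ x}, a⁻¹ ∂μ := by rw [setLIntegral_const, mul_comm]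
      _ ≤ ∫⁻ x in B \ {x | a < ρ x}, (ρ x)⁻¹ ∂μ :=
        setLIntegral_mono hρ.inv fun x hx => ENNReal.inv_le_inv.mpr (not_lt.mp hx.2)
      _ ≤ ∫⁻ x in B, (ρ x)⁻¹ ∂μ := lintegral_mono_set sdiff_subset
      _ = μ B * ⨍⁻ x in B, (ρ x)⁻¹ ∂μ := by
        rw [setLAverage_eq, ENNReal.mul_div_cancel hB₀ hB]
  have hc2 : c ≤ μ B / 2 := by
    have : 2 * c * a⁻¹ ≤ μ B * a⁻¹ := by
      calc 2 * c * a⁻¹ ≤ μ B * (2 * ⨍⁻ x in B, (ρ x)⁻¹ ∂μ) := by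
            rw [mul_assoc, mul_left_comm (μ B)]; gcongr
        _ ≤ μ B * a⁻¹ := by gcongr
    rw [ENNReal.le_div_iff_mul_le (by simp) (by simp), mul_comm]
    exact (ENNReal.mul_le_mul_iff_left (ENNReal.inv_ne_zero.mpr ha)
      (ENNReal.inv_ne_top.mpr ha₀)).mp this
  have hsplit : μ B / 2 + μ B / 2 ≤ μ (B ∩ {x | a < ρ x}) + μ B / 2 := by
    calc μ B / 2 + μ B / 2 = μ (B ∩ {x | a < ρ x}) + c := by
          rw [ENNReal.add_halves, measure_inter_add_sdiff B hU]
      _ ≤ μ (B ∩ {x | a < ρ x}) + μ B / 2 := by gcongr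
  rw [mul_comm, ← ENNReal.div_le_iff_le_mul (Or.inl two_ne_zero) (Or.inl ENNReal.ofNat_ne_top)]
  exact ENNReal.le_of_add_le_add_right (ENNReal.div_ne_top hB two_ne_zero) hsplit

end Prod

theorem Metric.compl_ball_nonempty {E : Type*} [NormedAddCommGroup E] [NormedSpace ℝ E]
    [Nontrivial E] (c : E) (r : ℝ) : (ball c r)ᶜ.Nonempty :=
  nonempty_compl.mpr fun h => NormedSpace.unbounded_univ ℝ E (h ▸ isBounded_ball)

theorem IsOpen.lowerSemicontinuous_iSup_mem {X : Type*} [TopologicalSpace X] {s : Set X}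
    (hs : IsOpen s) (a : ℝ≥0∞) : LowerSemicontinuous fun x => ⨆ _ : x ∈ s, a := by
  have : (fun x => ⨆ _ : x ∈ s, a) = s.indicator fun _ => a := by
    funext x
    by_cases hx : x ∈ s <;> simp [hx]
  exact this ▸ hs.lowerSemicontinuous_indicator bot_le

namespace TentSpace

local notation "𝔼" n:max => EuclideanSpace ℝ (Fin n)

variable {n : ℕ}

def shadow (z : ℝ × 𝔼 n) : Set (𝔼 n) := ball z.2 (√z.1)

variable (n) in
def cone : Set ((ℝ × 𝔼 n) × 𝔼 n) := {p | 0 < p.1.1 ∧ p.1.2 ∈ ball p.2 (√p.1.1)}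

theorem preimage_prodMk_cone (z : ℝ × 𝔼 n) : Prod.mk z ⁻¹' cone n = shadow z := by
  ext x
  simp only [cone, shadow, mem_preimage, mem_ofPred_eq, mem_ball, dist_comm z.2 x,
    and_iff_right_iff_imp]
  exact fun h => Real.sqrt_pos.mp (dist_nonneg.trans_lt h)

theorem measurableSet_cone : MeasurableSet (cone n) := by
  change MeasurableSet ({p : (ℝ × 𝔼 n) × 𝔼 n | 0 < p.1.1} ∩ {p | dist p.1.2 p.2 < √p.1.1})
  exact (measurableSet_lt measurable_const (by fun_prop)).inter
    (measurableSet_lt (by fun_prop) (by fun_prop))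

theorem sqFn_sq (G : ℝ × 𝔼 n → ℂ) (x : 𝔼 n) :
    sqFn n G x ^ 2
      = ∫⁻ z in (·, x) ⁻¹' cone n, ENNReal.ofReal (‖G z‖ ^ 2 / z.1 ^ ((n : ℝ) / 2)) := by
  rw [sqFn, ← ENNReal.rpow_natCast, ← ENNReal.rpow_mul]
  norm_num
  rfl

theorem measurable_sqFn {G : ℝ × 𝔼 n → ℂ} (hG : Measurable G) : Measurable (sqFn n G) :=
  (measurable_setLIntegral_preimage_prodMk_right measurableSet_cone (by fun_prop)).pow_const _

theorem carl2_sq (F : ℝ × 𝔼 n → ℂ) (x : 𝔼 n) :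
    carl2 n F x ^ 2 = ⨆ (c : 𝔼 n) (r : ℝ) (_ : 0 < r) (_ : x ∈ ball c r),
      (volume (ball c r))⁻¹ * ∫⁻ z in tentBall n c r, ENNReal.ofReal (‖F z‖ ^ 2) := by
  rw [carl2, ← ENNReal.rpow_natCast, ← ENNReal.rpow_mul]
  norm_num

theorem setLAverage_tentBall_le_carl2_sq (F : ℝ × 𝔼 n → ℂ) {c x : 𝔼 n} {r : ℝ} (hr : 0 < r)
    (hx : x ∈ ball c r) :
    (volume (ball c r))⁻¹ * ∫⁻ z in tentBall n c r, ENNReal.ofReal (‖F z‖ ^ 2)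
      ≤ carl2 n F x ^ 2 := by
  rw [carl2_sq]
  exact le_iSup₂_of_le c r (le_iSup₂_of_le hr hx le_rfl)

theorem measurable_carl2 (F : ℝ × 𝔼 n → ℂ) : Measurable (carl2 n F) := by
  refine LowerSemicontinuous.measurable ?_ |>.pow_const _
  refine lowerSemicontinuous_iSup fun c => lowerSemicontinuous_iSup fun r =>
    lowerSemicontinuous_iSup fun _ => ?_
  exact isOpen_ball.lowerSemicontinuous_iSup_mem _

variable (n) in
def halfFilled (U : Set (𝔼 n)) : Set (ℝ × 𝔼 n) :=
  {z | 0 < z.1 ∧ volume (shadow z) ≤ 2 * volume (shadow z ∩ U)}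

theorem volume_shadow {z : ℝ × 𝔼 n} (hz : 0 < z.1) :
    volume (shadow z) = ENNReal.ofReal (z.1 ^ ((n : ℝ) / 2)) * volume (ball (0 : 𝔼 n) 1) := by
  rw [shadow, Measure.addHaar_ball_of_pos _ _ (Real.sqrt_pos.mpr hz), finrank_euclideanSpace_fin,
    Real.sqrt_eq_rpow, ← Real.rpow_natCast, ← Real.rpow_mul hz.le]
  ring_nf

theorem volume_ball_mul_sqrt (k : ℝ) (hk : 0 < k) (z : ℝ × 𝔼 n) :
    volume (ball z.2 (k * √z.1)) = ENNReal.ofReal (k ^ n) * volume (shadow z) := by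
  rw [Measure.addHaar_ball_mul_of_pos _ _ hk, finrank_euclideanSpace_fin, shadow,
    Measure.addHaar_ball_center volume z.2]

theorem tentBall_subset_tentBall [NeZero n] {c c' : 𝔼 n} {r r' : ℝ} (h : ball c r ⊆ ball c' r') :
    tentBall n c r ⊆ tentBall n c' r' := fun _ ⟨hz, hle⟩ =>
  ⟨hz, hle.trans (infDist_le_infDist_of_subset (compl_subset_compl.mpr h)
    (compl_ball_nonempty c' r'))⟩

theorem mem_tentBall_self [NeZero n] {z : ℝ × 𝔼 n} (hz : 0 < z.1) :
    z ∈ tentBall n z.2 (√z.1) :=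
  ⟨hz, not_lt.mp fun h =>
    let ⟨_, hw, hd⟩ := (infDist_lt_iff (compl_ball_nonempty _ _)).mp h
    hw (mem_ball'.mpr hd)⟩

theorem mem_tentBall_of_shadow_inter_nonempty [NeZero n] {a b : ℝ × 𝔼 n} (ha : 0 < a.1)
    (hab : (shadow a ∩ shadow b).Nonempty) (hδ : √a.1 ≤ 2 * √b.1) :
    a ∈ tentBall n b.2 (5 * √b.1) := by
  obtain ⟨x, hxa, hxb⟩ := hab
  refine tentBall_subset_tentBall (ball_subset_ball' ?_) (mem_tentBall_self ha)
  have := dist_triangle a.2 x b.2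
  rw [shadow, mem_ball'] at hxa
  rw [shadow, mem_ball] at hxb
  linarith

theorem setLIntegral_tentBall_le [NeZero n] (F : ℝ × 𝔼 n → ℂ) {U : Set (𝔼 n)}
    {b : ℝ × 𝔼 n} (hb : b ∈ halfFilled n U) :
    ∫⁻ z in tentBall n b.2 (5 * √b.1), ENNReal.ofReal (‖F z‖ ^ 2)
      ≤ 2 * 5 ^ n * ∫⁻ x in shadow b ∩ U, carl2 n F x ^ 2 := by
  obtain ⟨hb₀, hbU⟩ := hb
  set I := ∫⁻ z in tentBall n b.2 (5 * √b.1), ENNReal.ofReal (‖F z‖ ^ 2)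
  set B' := ball b.2 (5 * √b.1)
  have hB' : volume B' = 5 ^ n * volume (shadow b) := by
    rw [volume_ball_mul_sqrt 5 (by norm_num), ENNReal.ofReal_pow (by norm_num)]
    norm_num
  have hB'₀ : volume B' ≠ 0 := (measure_ball_pos _ _ (by positivity)).ne'
  have hI : ∀ x ∈ shadow b ∩ U, I ≤ volume B' * carl2 n F x ^ 2 := fun x hx => by
    rw [← ENNReal.inv_mul_le_iff hB'₀ measure_ball_lt_top.ne]
    exact setLAverage_tentBall_le_carl2_sq F (by positivity)
      (ball_subset_ball (by linarith [Real.sqrt_nonneg b.1]) hx.1)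
  have hU₀ : volume (shadow b ∩ U) ≠ 0 := fun h => by
    rw [h, mul_zero, nonpos_iff_eq_zero] at hbU
    exact (measure_ball_pos volume _ (Real.sqrt_pos.mpr hb₀)).ne' hbU
  have hU : volume (shadow b ∩ U) ≠ ∞ := measure_ne_top_of_subset inter_subset_left
    measure_ball_lt_top.ne
  refine (ENNReal.mul_le_mul_iff_left hU₀ hU).mp ?_
  calc I * volume (shadow b ∩ U) = ∫⁻ _ in shadow b ∩ U, I := (setLIntegral_const _ _).symm
    _ ≤ ∫⁻ x in shadow b ∩ U, volume B' * carl2 n F x ^ 2 :=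
      setLIntegral_mono ((measurable_carl2 F).pow_const 2 |>.const_mul _) hI
    _ = 5 ^ n * volume (shadow b) * ∫⁻ x in shadow b ∩ U, carl2 n F x ^ 2 := by
      rw [lintegral_const_mul _ ((measurable_carl2 F).pow_const 2), hB']
    _ ≤ 5 ^ n * (2 * volume (shadow b ∩ U)) * ∫⁻ x in shadow b ∩ U, carl2 n F x ^ 2 := by
      gcongr
    _ = 2 * 5 ^ n * (∫⁻ x in shadow b ∩ U, carl2 n F x ^ 2) * volume (shadow b ∩ U) := by ring

theorem setLIntegral_le_of_subset_halfFilled [NeZero n] (F : ℝ × 𝔼 n → ℂ) {U : Set (𝔼 n)}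
    (hU : MeasurableSet U) {W : Set (ℝ × 𝔼 n)} (hW : W ⊆ halfFilled n U) {N : ℝ}
    (hN : ∀ z ∈ W, z.1 ≤ N) :
    ∫⁻ z in W, ENNReal.ofReal (‖F z‖ ^ 2) ≤ 2 * 5 ^ n * ∫⁻ x in U, carl2 n F x ^ 2 := by
  have hne : ∀ z ∈ W, (shadow z).Nonempty := fun z hz =>
    nonempty_ball.mpr (Real.sqrt_pos.mpr (hW hz).1)
  obtain ⟨u, huW, hdisj, hcov⟩ := Vitali.exists_disjoint_subfamily_covering_enlargement shadow W
    (fun z => √z.1) 2 one_lt_two (fun _ _ => Real.sqrt_nonneg _) (√N)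
    (fun z hz => Real.sqrt_le_sqrt (hN z hz)) hne
  have hu : u.Countable :=
    hdisj.countable_of_isOpen (fun _ _ => isOpen_ball) fun z hz => hne z (huW hz)
  have : Countable u := hu.to_subtype
  calc ∫⁻ z in W, ENNReal.ofReal (‖F z‖ ^ 2)
      ≤ ∫⁻ z in ⋃ b : u, tentBall n b.1.2 (5 * √b.1.1), ENNReal.ofReal (‖F z‖ ^ 2) := by
        refine lintegral_mono_set fun a ha => ?_
        obtain ⟨b, hb, hab, hδ⟩ := hcov a ha
        exact mem_iUnion.mpr ⟨⟨b, hb⟩, mem_tentBall_of_shadow_inter_nonempty (hW ha).1 hab hδ⟩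
    _ ≤ ∑' b : u, ∫⁻ z in tentBall n b.1.2 (5 * √b.1.1), ENNReal.ofReal (‖F z‖ ^ 2) :=
        lintegral_iUnion_le _ _
    _ ≤ ∑' b : u, 2 * 5 ^ n * ∫⁻ x in shadow b.1 ∩ U, carl2 n F x ^ 2 :=
        ENNReal.tsum_le_tsum fun b => setLIntegral_tentBall_le F (hW (huW b.2))
    _ = 2 * 5 ^ n * ∫⁻ x in ⋃ b : u, shadow b.1 ∩ U, carl2 n F x ^ 2 := by
        rw [ENNReal.tsum_mul_left, lintegral_iUnion (s := fun b : u => shadow b.1 ∩ U)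
          (fun _ => measurableSet_ball.inter hU)]
        exact fun b b' hbb' => (hdisj b.2 b'.2 (Subtype.coe_injective.ne hbb')).mono
          inter_subset_left inter_subset_left
    _ ≤ 2 * 5 ^ n * ∫⁻ x in U, carl2 n F x ^ 2 :=
        by gcongr; exact iUnion_subset fun _ => inter_subset_right

theorem setLIntegral_halfFilled_le [NeZero n] (F : ℝ × 𝔼 n → ℂ) {U : Set (𝔼 n)}
    (hU : MeasurableSet U) :
    ∫⁻ z in halfFilled n U, ENNReal.ofReal (‖F z‖ ^ 2)
      ≤ 2 * 5 ^ n * ∫⁻ x in U, carl2 n F x ^ 2 := by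
  have hunion : halfFilled n U = ⋃ N : ℕ, halfFilled n U ∩ {z | z.1 ≤ N} := by
    refine (iUnion_subset fun _ => inter_subset_left).antisymm' fun z hz => ?_
    exact mem_iUnion.mpr ⟨⌈z.1⌉₊, hz, Nat.le_ceil z.1⟩
  have hmono : Monotone fun N : ℕ => halfFilled n U ∩ {z | z.1 ≤ N} := fun N M hNM =>
    inter_subset_inter_right _ fun z (hz : z.1 ≤ N) => (hz.trans (Nat.cast_le.mpr hNM) : z.1 ≤ M)
  rw [← withDensity_apply', hunion, hmono.measure_iUnion]
  refine iSup_le fun N => ?_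
  rw [withDensity_apply']
  exact setLIntegral_le_of_subset_halfFilled F hU inter_subset_left fun z hz => hz.2

theorem measurable_setLAverage_shadow {g : 𝔼 n → ℝ≥0∞} (hg : Measurable g) :
    Measurable fun z : ℝ × 𝔼 n => ⨍⁻ x in shadow z, g x ∂volume := by
  simp_rw [setLAverage_eq, ← preimage_prodMk_cone]
  exact (measurable_setLIntegral_preimage_prodMk_left measurableSet_cone hg).div
    (measurable_measure_prodMk_left measurableSet_cone)

theorem mem_halfFilled_of_lt_inv {ρ : 𝔼 n → ℝ≥0∞} (hρ : Measurable ρ) {z : ℝ × 𝔼 n}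
    (hz : 0 < z.1) {ℓ : ℝ} (hℓ : 0 < ℓ)
    (h : ENNReal.ofReal ℓ < (2 * ⨍⁻ x in shadow z, (ρ x)⁻¹ ∂volume)⁻¹) :
    z ∈ halfFilled n {x | ENNReal.ofReal ℓ < ρ x} :=
  ⟨hz, measure_le_two_mul_measure_inter_lt_of_two_mul_setLAverage_inv_le hρ
    measure_ball_lt_top.ne (ENNReal.ofReal_pos.mpr hℓ).ne' ENNReal.ofReal_ne_top
    (ENNReal.lt_inv_iff_lt_inv.mp h).le⟩

theorem setLIntegral_mul_inv_setLAverage_inv_le [NeZero n] {F : ℝ × 𝔼 n → ℂ} (hF : Measurable F)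
    {ρ : 𝔼 n → ℝ≥0∞} (hρ : Measurable ρ) :
    ∫⁻ z in {z : ℝ × 𝔼 n | 0 < z.1},
        ENNReal.ofReal (‖F z‖ ^ 2) * (2 * ⨍⁻ x in shadow z, (ρ x)⁻¹ ∂volume)⁻¹
      ≤ 2 * 5 ^ n * ∫⁻ x, carl2 n F x ^ 2 * ρ x := by
  set T := {z : ℝ × 𝔼 n | 0 < z.1}
  set w := fun z : ℝ × 𝔼 n => (2 * ⨍⁻ x in shadow z, (ρ x)⁻¹ ∂volume)⁻¹
  set νF := (volume.restrict T).withDensity fun z => ENNReal.ofReal (‖F z‖ ^ 2)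
  set νC := volume.withDensity fun x => carl2 n F x ^ 2
  have hw : Measurable w := ((measurable_setLAverage_shadow hρ.inv).const_mul 2).inv
  have hlevel : ∀ ℓ ∈ Ioi (0 : ℝ),
      νF {z | ENNReal.ofReal ℓ < w z} ≤ 2 * 5 ^ n * νC {x | ENNReal.ofReal ℓ < ρ x} :=
    fun ℓ hℓ => by
      rw [withDensity_apply _ (measurableSet_lt measurable_const hw),
        withDensity_apply _ (measurableSet_lt measurable_const hρ),
        Measure.restrict_restrict' (measurableSet_lt measurable_const measurable_fst)]
      exact (lintegral_mono_set fun z hz => mem_halfFilled_of_lt_inv hρ hz.2 hℓ hz.1).trans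
        (setLIntegral_halfFilled_le F (measurableSet_lt measurable_const hρ))
  calc ∫⁻ z in T, ENNReal.ofReal (‖F z‖ ^ 2) * w z
      = ∫⁻ z, w z ∂νF := (lintegral_withDensity_eq_lintegral_mul _ (by fun_prop) hw).symm
    _ = ∫⁻ ℓ in Ioi 0, νF {z | ENNReal.ofReal ℓ < w z} := lintegral_eq_lintegral_meas_ofReal_lt hw
    _ ≤ ∫⁻ ℓ in Ioi 0, 2 * 5 ^ n * νC {x | ENNReal.ofReal ℓ < ρ x} :=
        setLIntegral_mono' measurableSet_Ioi hlevel
    _ = 2 * 5 ^ n * ∫⁻ x, carl2 n F x ^ 2 * ρ x := by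
        rw [lintegral_const_mul' _ _ (by finiteness), ← lintegral_eq_lintegral_meas_ofReal_lt hρ,
          lintegral_withDensity_eq_lintegral_mul _ ((measurable_carl2 F).pow_const 2) hρ]
        rfl

theorem setLIntegral_preimage_cone_div_volume_shadow (G : ℝ × 𝔼 n → ℂ) (x : 𝔼 n) :
    ∫⁻ z in (·, x) ⁻¹' cone n, ENNReal.ofReal (‖G z‖ ^ 2) / volume (shadow z)
      = (volume (ball (0 : 𝔼 n) 1))⁻¹ * sqFn n G x ^ 2 := by
  have hv : volume (ball (0 : 𝔼 n) 1) ≠ 0 := (measure_ball_pos _ _ one_pos).ne'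
  rw [sqFn_sq, ← lintegral_const_mul' _ _ (ENNReal.inv_ne_top.mpr hv)]
  refine setLIntegral_congr_fun (measurableSet_cone.preimage (by fun_prop)) fun z hz => ?_
  have hpow : 0 < z.1 ^ ((n : ℝ) / 2) := Real.rpow_pos_of_pos hz.1 _
  rw [volume_shadow hz.1, ENNReal.ofReal_div_of_pos hpow, ENNReal.div_eq_inv_mul,
    ENNReal.div_eq_inv_mul, ENNReal.mul_inv (Or.inl (ENNReal.ofReal_pos.mpr hpow).ne')
    (Or.inl ENNReal.ofReal_ne_top)]
  ring

theorem lintegral_mul_setLAverage_inv {G : ℝ × 𝔼 n → ℂ} (hG : Measurable G)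
    {ρ : 𝔼 n → ℝ≥0∞} (hρ : Measurable ρ) :
    ∫⁻ z, ENNReal.ofReal (‖G z‖ ^ 2) * (2 * ⨍⁻ x in shadow z, (ρ x)⁻¹ ∂volume)
      = 2 * (volume (ball (0 : 𝔼 n) 1))⁻¹ * ∫⁻ x, (ρ x)⁻¹ * sqFn n G x ^ 2 := by
  have hg : Measurable fun z : ℝ × 𝔼 n => ENNReal.ofReal (‖G z‖ ^ 2) / volume (shadow z) :=
    (by fun_prop : Measurable fun z => ENNReal.ofReal (‖G z‖ ^ 2)).div
      (by simpa only [preimage_prodMk_cone] using measurable_measure_prodMk_left measurableSet_cone)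
  have hρ' : Measurable fun x => (ρ x)⁻¹ := hρ.inv
  calc ∫⁻ z, ENNReal.ofReal (‖G z‖ ^ 2) * (2 * ⨍⁻ x in shadow z, (ρ x)⁻¹ ∂volume)
      = 2 * ∫⁻ z, ENNReal.ofReal (‖G z‖ ^ 2) / volume (shadow z) *
          ∫⁻ x in Prod.mk z ⁻¹' cone n, (ρ x)⁻¹ := by
        rw [← lintegral_const_mul' _ _ ENNReal.ofNat_ne_top]
        refine lintegral_congr fun z => ?_
        rw [setLAverage_eq, preimage_prodMk_cone, ENNReal.div_eq_inv_mul, ENNReal.div_eq_inv_mul]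
        ring
    _ = 2 * ∫⁻ x, (ρ x)⁻¹ * ((volume (ball (0 : 𝔼 n) 1))⁻¹ * sqFn n G x ^ 2) := by
        rw [lintegral_mul_setLIntegral_preimage_prodMk_comm measurableSet_cone hg hρ']
        simp_rw [setLIntegral_preimage_cone_div_volume_shadow]
    _ = 2 * (volume (ball (0 : 𝔼 n) 1))⁻¹ * ∫⁻ x, (ρ x)⁻¹ * sqFn n G x ^ 2 := by
        rw [mul_assoc, ← lintegral_const_mul' _ _ (ENNReal.inv_ne_top.mpr
          (measure_ball_pos _ _ one_pos).ne')]
        simp_rw [mul_left_comm]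

end TentSpace

open TentSpace

/-- **Duality estimate:** `∫ |F||G| ≤ C ∫ 𝒞₂(F)(x) S(G)(x) dx`; consequently
`T^{∞,2}` embeds in the dual of `T^{1,2}`. -/
theorem carleson_square_duality (n : ℕ) (hn : 1 ≤ n) :
    ∃ C : ℝ, 0 < C ∧
      ∀ (F G : ℝ × EuclideanSpace ℝ (Fin n) → ℂ), Measurable F → Measurable G →
        (∫⁻ z in {z : ℝ × EuclideanSpace ℝ (Fin n) | 0 < z.1},
            ENNReal.ofReal (‖F z‖ * ‖G z‖))
          ≤ ENNReal.ofReal C * ∫⁻ x, carl2 n F x * sqFn n G x := by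
  have : NeZero n := ⟨by omega⟩
  set v := volume (ball (0 : EuclideanSpace ℝ (Fin n)) 1)
  have hv : v ≠ 0 := (measure_ball_pos _ _ one_pos).ne'
  set K : ℝ≥0∞ := 2 * 5 ^ n + 2 * v⁻¹
  have hK : K ≠ ∞ := by finiteness
  refine ⟨K.toReal, ENNReal.toReal_pos (by positivity) hK, fun F G hF hG => ?_⟩
  set ρ := fun x => sqFn n G x / carl2 n F x
  have hρ : Measurable ρ := (measurable_sqFn hG).div (measurable_carl2 F)
  set w := fun z => 2 * ⨍⁻ x in shadow z, (ρ x)⁻¹ ∂volume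
  have hw : Measurable w := (measurable_setLAverage_shadow hρ.inv).const_mul 2
  rw [ENNReal.ofReal_toReal hK]
  calc ∫⁻ z in {z | 0 < z.1}, ENNReal.ofReal (‖F z‖ * ‖G z‖)
      ≤ ∫⁻ z in {z | 0 < z.1},
          ENNReal.ofReal (‖F z‖ ^ 2) * (w z)⁻¹ + ENNReal.ofReal (‖G z‖ ^ 2) * w z :=
        lintegral_mono fun z => by
          simp only [ENNReal.ofReal_mul (norm_nonneg _), ENNReal.ofReal_pow (norm_nonneg _)]
          exact ENNReal.mul_le_sq_mul_inv_add_sq_mul _ _ _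
    _ ≤ 2 * 5 ^ n * (∫⁻ x, carl2 n F x ^ 2 * ρ x) + 2 * v⁻¹ * ∫⁻ x, (ρ x)⁻¹ * sqFn n G x ^ 2 := by
        rw [lintegral_add_left (by fun_prop)]
        exact add_le_add (setLIntegral_mul_inv_setLAverage_inv_le hF hρ)
          (setLIntegral_le_lintegral _ _ |>.trans (lintegral_mul_setLAverage_inv hG hρ).le)
    _ ≤ K * ∫⁻ x, carl2 n F x * sqFn n G x := by
        rw [add_mul]
        gcongr 2 * 5 ^ n * ?_ + 2 * v⁻¹ * ?_
        exacts [lintegral_mono fun x => ENNReal.sq_mul_div_le_mul _ _,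
          lintegral_mono fun x => ENNReal.inv_div_mul_sq_le_mul _ _]
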